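/- If w and u are nonempty rich words, u is a palindromic factor of w, then every complete return to u in w is a palindrome. -/

import Mathlib

def Rich {A : Type*} (w : List A) : Prop :=
  {p : List A | p.reverse = p ∧ p <:+: w}.ncard = w.length + 1
def occ {A : Type*} [DecidableEq A] (u v : List A) : ℕ :=
  ((List.range (u.length + 1)).filter (fun i => v.isPrefixOf (u.drop i))).length

/-!
Appending a letter to a word creates at most one new palindromic factor: every new one is a
palindromic suffix, and of two palindromic suffixes the shorter is also a prefix of the longer,
hence occurs earlier. So a word of length `n` has at most `n + 1` palindromic factors, richness
passes to prefixes and, by reversal, to all factors, and in a rich word the last letter does create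
a new palindrome.

Let `r` be a complete return to `u` in `w`. Then `r` is rich, so it has a palindromic suffix `P`
occurring only once in `r`. By the nesting of palindromic suffixes `u` is a prefix of `P`, so the
start of `P` is an occurrence of `u`: either `P = r`, and `r` is a palindrome, or `P = u`, which
is impossible as `u` also occurs as a proper prefix of `r`.
-/

section PalindromicFactors

variable {A : Type*}

def palFactors (w : List A) : Set (List A) := {p | p.reverse = p ∧ p <:+: w}

lemma rich_iff_ncard_palFactors (w : List A) : Rich w ↔ (palFactors w).ncard = w.length + 1 :=
  Iff.rfl

lemma palFactors_finite (w : List A) : (palFactors w).Finite :=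
  w.sublists.finite_toSet.subset fun _ hp => List.mem_sublists.mpr hp.2.sublist

lemma palFactors_nil : palFactors (A := A) [] = {[]} := by
  ext p
  simp only [palFactors, Set.mem_ofPred_eq, List.infix_nil, Set.mem_singleton_iff]
  exact ⟨And.right, by rintro rfl; simp⟩

lemma palFactors_reverse (w : List A) : palFactors w.reverse = List.reverse '' palFactors w := by
  ext p
  constructor
  · rintro ⟨hp, hpw⟩
    exact ⟨p, ⟨hp, by rwa [← List.reverse_infix, hp]⟩, hp⟩
  · rintro ⟨q, ⟨hq, hqw⟩, rfl⟩
    exact ⟨by rw [List.reverse_reverse, hq], List.reverse_infix.mpr hqw⟩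

lemma prefix_of_palindrome_suffix {p q w : List A} (hp : p.reverse = p) (hq : q.reverse = q)
    (hpw : p <:+ w) (hqw : q <:+ w) (hle : p.length ≤ q.length) : p <+: q := by
  rw [← hp, ← hq, List.reverse_prefix]
  exact List.suffix_of_suffix_length_le hpw hqw hle

lemma infix_dropLast_of_prefix_of_suffix {p q w : List A} (hpq : p <+: q)
    (hlt : p.length < q.length) (hqw : q <:+ w) : p <:+: w.dropLast := by
  obtain ⟨t, rfl⟩ := hpq
  obtain ⟨s, rfl⟩ := hqw
  have ht : t ≠ [] := by rintro rfl; simp at hlt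
  exact ⟨s, t.dropLast, by rw [← List.append_assoc, List.dropLast_append_of_ne_nil ht]⟩

lemma infix_dropLast_of_palindrome_suffix {p q w : List A} (hp : p.reverse = p)
    (hq : q.reverse = q) (hpw : p <:+ w) (hqw : q <:+ w) (hlt : p.length < q.length) :
    p <:+: w.dropLast :=
  infix_dropLast_of_prefix_of_suffix (prefix_of_palindrome_suffix hp hq hpw hqw hlt.le) hlt hqw

lemma suffix_of_mem_palFactors_append_singleton_diff {p v : List A} {a : A}
    (hp : p ∈ palFactors (v ++ [a]) \ palFactors v) : p <:+ v ++ [a] :=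
  (List.infix_concat_iff.mp hp.1.2).resolve_right fun h => hp.2 ⟨hp.1.1, h⟩

lemma palFactors_append_singleton_diff_subsingleton (v : List A) (a : A) :
    (palFactors (v ++ [a]) \ palFactors v).Subsingleton := by
  have eq_of_length_le : ∀ p ∈ palFactors (v ++ [a]) \ palFactors v,
      ∀ q ∈ palFactors (v ++ [a]) \ palFactors v, p.length ≤ q.length → p = q := by
    intro p hp q hq hle
    have hpv := suffix_of_mem_palFactors_append_singleton_diff hp
    have hqv := suffix_of_mem_palFactors_append_singleton_diff hq
    rcases hle.lt_or_eq with hlt | heq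
    · have := infix_dropLast_of_palindrome_suffix hp.1.1 hq.1.1 hpv hqv hlt
      rw [List.dropLast_concat] at this
      exact absurd ⟨hp.1.1, this⟩ hp.2
    · exact (List.suffix_of_suffix_length_le hpv hqv heq.le).eq_of_length heq
  intro p hp q hq
  rcases le_total p.length q.length with h | h
  exacts [eq_of_length_le p hp q hq h, (eq_of_length_le q hq p hp h).symm]

lemma ncard_palFactors_append_singleton_le (v : List A) (a : A) :
    (palFactors (v ++ [a])).ncard ≤ (palFactors v).ncard + 1 := by
  have hnew : (palFactors (v ++ [a]) \ palFactors v).ncard ≤ 1 :=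
    (Set.ncard_le_one_iff ((palFactors_finite _).sdiff)).mpr fun hp hq =>
      palFactors_append_singleton_diff_subsingleton v a hp hq
  have := Set.ncard_le_ncard_sdiff_add_ncard (palFactors (v ++ [a])) (palFactors v)
    (palFactors_finite v)
  omega

lemma ncard_palFactors_append_le (v t : List A) :
    (palFactors (v ++ t)).ncard ≤ (palFactors v).ncard + t.length := by
  induction t using List.reverseRecOn with
  | nil => simp
  | append_singleton t a ih =>
    have := ncard_palFactors_append_singleton_le (v ++ t) a
    rw [← List.append_assoc]
    simp only [List.length_append, List.length_singleton]
    omega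

lemma ncard_palFactors_le (w : List A) : (palFactors w).ncard ≤ w.length + 1 := by
  simpa [palFactors_nil, add_comm] using ncard_palFactors_append_le [] w

end PalindromicFactors

namespace Rich

variable {A : Type*}

lemma of_prefix {v w : List A} (hvw : v <+: w) (hw : Rich w) : Rich v := by
  obtain ⟨t, rfl⟩ := hvw
  rw [rich_iff_ncard_palFactors, List.length_append] at hw
  have := ncard_palFactors_append_le v t
  have := ncard_palFactors_le v
  rw [rich_iff_ncard_palFactors]
  omega

lemma reverse {w : List A} (hw : Rich w) : Rich w.reverse := by
  rwa [rich_iff_ncard_palFactors, palFactors_reverse,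
    Set.ncard_image_of_injective _ List.reverse_injective, List.length_reverse]

lemma of_suffix {v w : List A} (hvw : v <:+ w) (hw : Rich w) : Rich v := by
  simpa using (hw.reverse.of_prefix (List.reverse_prefix.mpr hvw)).reverse

lemma of_infix {v w : List A} (hvw : v <:+: w) (hw : Rich w) : Rich v := by
  obtain ⟨s, t, rfl⟩ := hvw
  exact (hw.of_suffix ⟨s, (List.append_assoc s v t).symm⟩).of_prefix (List.prefix_append v t)

lemma exists_palindrome_suffix_not_infix {v : List A} {a : A} (h : Rich (v ++ [a])) :
    ∃ P : List A, P.reverse = P ∧ P <:+ v ++ [a] ∧ ¬ P <:+: v := by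
  have hv := h.of_prefix (List.prefix_append v [a])
  rw [rich_iff_ncard_palFactors] at h hv
  have hnew : ¬ palFactors (v ++ [a]) ⊆ palFactors v := fun hsub => by
    have := Set.ncard_le_ncard hsub (palFactors_finite v)
    simp only [List.length_append, List.length_singleton] at h
    omega
  obtain ⟨P, hP⟩ := Set.sdiff_nonempty.mpr hnew
  exact ⟨P, hP.1.1, suffix_of_mem_palFactors_append_singleton_diff hP, fun h => hP.2 ⟨hP.1.1, h⟩⟩

end Rich

section Occurrences

variable {A : Type*} [DecidableEq A]

lemma occ_eq_card (v u : List A) :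
    occ v u = ((Finset.range (v.length + 1)).filter fun i => u <+: v.drop i).card := by
  simp only [occ, Finset.card_def, Finset.filter_val, Finset.range_val, Multiset.range,
    Multiset.filter_coe, Multiset.coe_card]
  congr 2
  funext i
  rw [Bool.eq_iff_iff, List.isPrefixOf_iff_prefix, decide_eq_true_iff]

lemma eq_or_eq_of_occ_eq_two {v u : List A} (h : occ v u = 2) {i j k : ℕ} (hij : i ≠ j)
    (hi : i ≤ v.length) (hui : u <+: v.drop i) (hj : j ≤ v.length) (huj : u <+: v.drop j)
    (hk : k ≤ v.length) (huk : u <+: v.drop k) : k = i ∨ k = j := by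
  rw [occ_eq_card] at h
  have hsub : {i, j} ⊆ (Finset.range (v.length + 1)).filter fun i => u <+: v.drop i := by
    intro x hx
    simp only [Finset.mem_insert, Finset.mem_singleton] at hx
    rcases hx with rfl | rfl <;> simp [*]
  have heq := Finset.eq_of_subset_of_card_le hsub (by rw [h, Finset.card_pair hij])
  have hkmem : k ∈ ({i, j} : Finset ℕ) := by
    rw [heq]; simp [*]
  simpa using hkmem

end Occurrences

theorem stmt3_general {A : Type*} [DecidableEq A] (w u : List A) (hw : Rich w) (hpal : u.reverse = u) :
    ∀ r : List A, r <:+: w → u <+: r → u <:+ r → occ r u = 2 →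
      r.reverse = r := by
  intro r hrw hupre husuf hocc
  rcases hupre.length_le.eq_or_lt with hlen | hlt
  · rwa [← hupre.eq_of_length hlen]
  obtain ⟨v, a, hr⟩ := (List.eq_nil_or_concat r).resolve_left (by rintro rfl; simp at hlt)
  rw [List.concat_eq_append] at hr
  subst hr
  have hu_infix : u <:+: v := by
    simpa using infix_dropLast_of_prefix_of_suffix hupre hlt List.suffix_rfl
  obtain ⟨P, hPpal, hPsuf, hPnew⟩ := (hw.of_infix hrw).exists_palindrome_suffix_not_infix
  have huP : u <+: P := by
    refine prefix_of_palindrome_suffix hpal hPpal husuf hPsuf (not_lt.mp fun hPu => hPnew ?_)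
    simpa using infix_dropLast_of_palindrome_suffix hPpal hpal hPsuf husuf hPu
  have hPocc : u <+: (v ++ [a]).drop ((v ++ [a]).length - P.length) := by
    rwa [← List.suffix_iff_eq_drop.mp hPsuf]
  have huocc : u <+: (v ++ [a]).drop ((v ++ [a]).length - u.length) := by
    rw [← List.suffix_iff_eq_drop.mp husuf]
  have hP_le := hPsuf.length_le
  rcases eq_or_eq_of_occ_eq_two hocc (i := 0) (by omega) (by omega) (by simpa using hupre)
      (by omega) huocc (by omega) hPocc with hP_start | hP_end
  · rwa [← hPsuf.eq_of_length (by omega)]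
  · have hPu : P = u :=
      (List.suffix_of_suffix_length_le hPsuf husuf (by omega)).eq_of_length (by omega)
    exact absurd (hPu ▸ hu_infix) hPnew

theorem stmt3 {A : Type*} [DecidableEq A] (w u : List A)
    (hw : Rich w) (hu : Rich u) (hwne : w ≠ []) (hune : u ≠ [])
    (hpal : u.reverse = u) (hfac : u <:+: w) :
    ∀ r : List A, r <:+: w → u <+: r → u <:+ r → occ r u = 2 →
      r.reverse = r :=
  stmt3_general w u hw hpal
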